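/- arXiv:2012.01466 — 2 statements merged into one kernel-verified Lean document; each statement's English description precedes it below -/
import Mathlib

section
/- Let η be a positive equivalence relation such that at least one η-family is finitely learnable. Then there is an η-family that is confidently learnable but not finitely learnable. -/
namespace PEL

/-- Evaluation of the `e`-th partial recursive function (via the standard
numbering of `Nat.Partrec.Code`). -/
def evalCode (e : ℕ) (x : ℕ) : Part ℕ :=
  (Denumerable.ofNat Nat.Partrec.Code e).eval x

/-- The `e`-th recursively enumerable set `W_e = dom φ_e`. -/
def W (e : ℕ) : Set ℕ := {x | (evalCode e x).Dom}

/-- A set is r.e. iff it equals some `W_e`. -/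
def RESet (S : Set ℕ) : Prop := ∃ e, W e = S

/-- A positive equivalence relation: an r.e. equivalence relation on ℕ
with infinitely many equivalence classes. -/
structure PosEq where
  rel : ℕ → ℕ → Prop
  equiv : Equivalence rel
  re : ∃ e, ∀ x y, rel x y ↔ Nat.pair x y ∈ W e
  classes_infinite : (Set.range fun x => {y | rel x y}).Infinite

/-- The η-equivalence class of `x`. -/
def classOf (η : PosEq) (x : ℕ) : Set ℕ := {y | η.rel x y}

/-- A set is η-closed iff it is a union of η-equivalence classes. -/
def EtaClosed (η : PosEq) (S : Set ℕ) : Prop := ∀ x ∈ S, classOf η x ⊆ S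

/-- A set is η-finite iff it is a union of finitely many η-equivalence classes. -/
def EtaFinite (η : PosEq) (S : Set ℕ) : Prop :=
  EtaClosed η S ∧ (classOf η '' S).Finite

/-- A set is η-infinite iff it is a union of infinitely many η-equivalence classes. -/
def EtaInfinite (η : PosEq) (S : Set ℕ) : Prop :=
  EtaClosed η S ∧ (classOf η '' S).Infinite

/-- `f` is a one-one uniformly r.e. numbering of the class `C`:
`f` is computable, `i ↦ W_{f i}` is injective, and `C = {W_{f i} : i ∈ ℕ}`. -/
def OneOneNumbering (f : ℕ → ℕ) (C : Set (Set ℕ)) : Prop :=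
  Computable f ∧ (∀ i j, W (f i) = W (f j) → i = j) ∧ C = Set.range fun i => W (f i)

/-- An η-family: an (automatically infinite) class of η-closed r.e. sets
admitting a one-one uniformly r.e. numbering. -/
def EtaFamily (η : PosEq) (C : Set (Set ℕ)) : Prop :=
  (∀ L ∈ C, EtaClosed η L) ∧ ∃ f, OneOneNumbering f C

/-- `a η n` is the `n`-th (in ascending order) least representative of an
η-equivalence class. -/
noncomputable def a (η : PosEq) (n : ℕ) : ℕ := Nat.nth (fun x => ∀ y, η.rel x y → x ≤ y) n

/-- `A η n = [a_0] ∪ … ∪ [a_{n-1}]`. -/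
def A (η : PosEq) (n : ℕ) : Set ℕ := {x | ∃ m < n, η.rel (a η m) x}

/-- The ascending family `𝒜_η = {A_n : n ∈ ℕ}`. -/
def ascendingFamily (η : PosEq) : Set (Set ℕ) := Set.range (A η)

/-- A learner: a map from finite sequences over ℕ ∪ {#} (with `none` as the
pause symbol `#`) to hypotheses in ℕ ∪ {?} (with `none` as `?`). -/
abbrev Learner := List (Option ℕ) → Option ℕ

/-- The content of a text. -/
def cntT (T : ℕ → Option ℕ) : Set ℕ := {x | ∃ n, T n = some x}

/-- `T` is a text for `L`. -/
def IsText (T : ℕ → Option ℕ) (L : Set ℕ) : Prop := cntT T = L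

/-- The initial segment `T[n] = T(0), …, T(n-1)`. -/
def seg (T : ℕ → Option ℕ) (n : ℕ) : List (Option ℕ) := (List.range n).map T

/-- The content of a finite sequence. -/
def cntL (σ : List (Option ℕ)) : Set ℕ := {x | some x ∈ σ}

/-- Explanatory learning with hypotheses interpreted in hypothesis space `H`. -/
def ExLearnsIn (H : ℕ → Set ℕ) (M : Learner) (C : Set (Set ℕ)) : Prop :=
  ∀ L ∈ C, ∀ T, IsText T L →
    ∃ n e, M (seg T n) = some e ∧ H e = L ∧ ∀ j, n ≤ j → M (seg T j) = M (seg T n)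

/-- Behaviourally correct learning with hypothesis space `H`. -/
def BCLearnsIn (H : ℕ → Set ℕ) (M : Learner) (C : Set (Set ℕ)) : Prop :=
  ∀ L ∈ C, ∀ T, IsText T L →
    ∃ n, ∀ j, n ≤ j → ∃ e, M (seg T j) = some e ∧ H e = L

/-- Finite (one-shot) learning with hypothesis space `H`. -/
def FinLearnsIn (H : ℕ → Set ℕ) (M : Learner) (C : Set (Set ℕ)) : Prop :=
  ∀ L ∈ C, ∀ T, IsText T L →
    ∃ n e, M (seg T n) = some e ∧ H e = L ∧ (∀ m, m < n → M (seg T m) = none) ∧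
      ∀ j, n ≤ j → M (seg T j) = M (seg T n)

/-- The sequence of hypotheses of `M` on text `T` converges. -/
def ConvergesOn (M : Learner) (T : ℕ → Option ℕ) : Prop :=
  ∃ n, ∀ j, n ≤ j → M (seg T j) = M (seg T n)

/-- Confident learning with hypothesis space `H`: explanatory learning with
convergence on every text for every subset of ℕ. -/
def ConfLearnsIn (H : ℕ → Set ℕ) (M : Learner) (C : Set (Set ℕ)) : Prop :=
  ExLearnsIn H M C ∧ ∀ T, ConvergesOn M T

/-- Vacillatory learning with hypothesis space `H`. -/
def VacLearnsIn (H : ℕ → Set ℕ) (M : Learner) (C : Set (Set ℕ)) : Prop :=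
  BCLearnsIn H M C ∧
    ∀ L ∈ C, ∀ T, IsText T L → {h : Option ℕ | ∃ n, 1 ≤ n ∧ M (seg T n) = h}.Finite

/-- Weakly confident learning with hypothesis space `H`: explanatory learning
with convergence on every text consistent with the class. -/
def WConfLearnsIn (H : ℕ → Set ℕ) (M : Learner) (C : Set (Set ℕ)) : Prop :=
  ExLearnsIn H M C ∧ ∀ T, (∃ L ∈ C, cntT T ⊆ L) → ConvergesOn M T

def ExLearnable (C : Set (Set ℕ)) : Prop :=
  ∃ M : Learner, Computable M ∧ ExLearnsIn W M C

def BCLearnable (C : Set (Set ℕ)) : Prop :=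
  ∃ M : Learner, Computable M ∧ BCLearnsIn W M C

def FinLearnable (C : Set (Set ℕ)) : Prop :=
  ∃ M : Learner, Computable M ∧ FinLearnsIn W M C

def ConfLearnable (C : Set (Set ℕ)) : Prop :=
  ∃ M : Learner, Computable M ∧ ConfLearnsIn W M C

def VacLearnable (C : Set (Set ℕ)) : Prop :=
  ∃ M : Learner, Computable M ∧ VacLearnsIn W M C

def WConfLearnable (C : Set (Set ℕ)) : Prop :=
  ∃ M : Learner, Computable M ∧ WConfLearnsIn W M C


/-!
Let `M` finitely learn an η-family with one-one numbering `B₀, B₁, …` and put `I = B₀ ∩ B₁`,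
an η-closed r.e. set. On data from `I` the learner `M` must stay silent, since its first
conjecture there would be correct on texts for both `B₀` and `B₁`. So `I` is not among the `Bᵢ`,
and `{I} ∪ {Bᵢ}` is again an η-family. It is not finitely learnable: a finite learner commits on
a prefix of a text for `I`, which also begins a text for `B₀ ⊋ I`. It is confidently learnable
by the learner that conjectures a code of `I` until `M` first conjectures something and keeps
that conjecture forever: it changes its mind at most once.
-/

lemma length_seg (T : ℕ → Option ℕ) (n : ℕ) : (seg T n).length = n := by
  simp [seg]

lemma take_seg (T : ℕ → Option ℕ) {k n : ℕ} (h : k ≤ n) : (seg T n).take k = seg T k := by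
  simp only [seg, ← List.map_take, List.take_range, Nat.min_eq_left h]

lemma cntL_seg_subset_cntT (T : ℕ → Option ℕ) (n : ℕ) : cntL (seg T n) ⊆ cntT T := by
  intro x hx
  obtain ⟨m, -, hm⟩ := List.mem_map.1 hx
  exact ⟨m, hm⟩

lemma exists_text (L : Set ℕ) : ∃ T, IsText T L := by
  rcases L.eq_empty_or_nonempty with rfl | hL
  · exact ⟨fun _ => none, by ext; simp [cntT]⟩
  · obtain ⟨g, rfl⟩ := L.to_countable.exists_eq_range hL
    exact ⟨fun n => some (g n), by ext; simp [cntT]⟩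

lemma exists_text_agreeing {T : ℕ → Option ℕ} {n : ℕ} {L : Set ℕ} (hT : cntL (seg T n) ⊆ L) :
    ∃ T', IsText T' L ∧ ∀ k ≤ n, seg T' k = seg T k := by
  obtain ⟨T₀, hT₀⟩ := exists_text L
  refine ⟨fun k => if k < n then T k else T₀ (k - n), ?_, fun k hk => ?_⟩
  · subst hT₀
    ext x
    constructor
    · rintro ⟨k, hk⟩
      dsimp only at hk
      split_ifs at hk with hkn
      · exact hT (List.mem_map.2 ⟨k, List.mem_range.2 hkn, hk⟩)
      · exact ⟨k - n, hk⟩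
    · rintro ⟨k, hk⟩
      exact ⟨k + n, by simpa using hk⟩
  · refine List.map_congr_left fun i hi => ?_
    rw [if_pos ((List.mem_range.1 hi).trans_le hk)]

namespace FinLearnsIn

variable {H : ℕ → Set ℕ} {M : Learner} {C : Set (Set ℕ)}

lemma first_conjecture_correct (hM : FinLearnsIn H M C) {L : Set ℕ} (hL : L ∈ C)
    {T : ℕ → Option ℕ} (hT : IsText T L) {k e : ℕ} (hk : M (seg T k) = some e)
    (hmin : ∀ m < k, M (seg T m) = none) : H e = L := by
  obtain ⟨n, e', hn, he', hbefore, -⟩ := hM L hL T hT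
  obtain rfl : n = k := by
    by_contra hne
    rcases Nat.lt_or_gt_of_ne hne with h | h
    · simp [hmin n h] at hn
    · simp [hbefore k h] at hk
  exact Option.some.inj (hk.symm.trans hn) ▸ he'

-- The data extends to texts for both sets, and the first conjecture is correct on both texts.
lemma eq_of_conjecture_on_common_data (hM : FinLearnsIn H M C) {L L' : Set ℕ} (hL : L ∈ C)
    (hL' : L' ∈ C) {T : ℕ → Option ℕ} {n : ℕ} (hdata : cntL (seg T n) ⊆ L ∩ L')
    (hconj : M (seg T n) ≠ none) : L = L' := by
  classical
  have hex : ∃ k, M (seg T k) ≠ none := ⟨n, hconj⟩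
  obtain ⟨e, he⟩ := Option.ne_none_iff_exists'.1 (Nat.find_spec hex)
  have hkn : Nat.find hex ≤ n := Nat.find_min' hex hconj
  have hcorrect : ∀ {K}, K ∈ C → cntL (seg T n) ⊆ K → H e = K := by
    intro K hK hsub
    obtain ⟨T', hT', hagree⟩ := exists_text_agreeing hsub
    refine hM.first_conjecture_correct hK hT' (k := Nat.find hex) ?_ fun m hm => ?_
    · rwa [hagree _ hkn]
    · rw [hagree m (hm.le.trans hkn)]
      exact not_not.1 (Nat.find_min hex hm)
  rw [← hcorrect hL fun _ hx => (hdata hx).1, hcorrect hL' fun _ hx => (hdata hx).2]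

lemma eq_of_subset (hM : FinLearnsIn H M C) {L L' : Set ℕ} (hL : L ∈ C) (hL' : L' ∈ C)
    (hsub : L ⊆ L') : L = L' := by
  obtain ⟨T, hT⟩ := exists_text L
  obtain ⟨n, e, hn, -⟩ := hM L hL T hT
  refine hM.eq_of_conjecture_on_common_data hL hL' (T := T) (n := n) ?_ (by simp [hn])
  intro x hx
  have hxL : x ∈ L := hT ▸ cntL_seg_subset_cntT T n hx
  exact ⟨hxL, hsub hxL⟩

end FinLearnsIn

def firstConjecture (M : Learner) (σ : List (Option ℕ)) : ℕ → Option ℕ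
  | 0 => M (σ.take 0)
  | k + 1 => (firstConjecture M σ k).or (M (σ.take (k + 1)))

lemma firstConjecture_eq_none {M : Learner} {σ : List (Option ℕ)} {n : ℕ}
    (h : ∀ k ≤ n, M (σ.take k) = none) : firstConjecture M σ n = none := by
  induction n with
  | zero => exact h 0 le_rfl
  | succ n ih =>
    rw [firstConjecture, ih fun k hk => h k (hk.trans n.le_succ), h (n + 1) le_rfl]
    rfl

lemma firstConjecture_eq_some {M : Learner} {σ : List (Option ℕ)} {k n v : ℕ} (hkn : k ≤ n)
    (hk : M (σ.take k) = some v) (hmin : ∀ m < k, M (σ.take m) = none) :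
    firstConjecture M σ n = some v := by
  induction n with
  | zero => rwa [Nat.le_zero.1 hkn] at hk
  | succ n ih =>
    rcases hkn.lt_or_eq with hlt | rfl
    · rw [firstConjecture, ih (Nat.lt_succ_iff.1 hlt), Option.some_or]
    · rw [firstConjecture, firstConjecture_eq_none fun m hm => hmin m (Nat.lt_succ_of_le hm), hk,
        Option.none_or]

lemma computable_firstConjecture {M : Learner} (hM : Computable M) :
    Computable fun σ : List (Option ℕ) => firstConjecture M σ σ.length := by
  have htake : Computable₂ fun (σ : List (Option ℕ)) (k : ℕ) => σ.take k :=
    (Primrec.list_take.comp Primrec.snd Primrec.fst).to_comp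
  have hstep : Computable₂ fun (σ : List (Option ℕ)) (p : ℕ × Option ℕ) =>
      p.2.or (M (σ.take (p.1 + 1))) := by
    refine (Computable.option_casesOn (Computable.snd.comp Computable.snd)
      (hM.comp (htake.comp Computable.fst (Computable.succ.comp
        (Computable.fst.comp Computable.snd))))
      (Computable.option_some.comp Computable.snd).to₂).of_eq fun ⟨σ, k, o⟩ => ?_
    cases o <;> rfl
  refine (Computable.nat_rec Computable.list_length (hM.comp (htake.comp Computable.id
    (Computable.const 0))) hstep).of_eq fun σ => ?_
  induction σ.length with
  | zero => rfl
  | succ n ih => simp only [firstConjecture, ← ih]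

def keepFirstConjecture (M : Learner) (e₀ : ℕ) : Learner :=
  fun σ => some ((firstConjecture M σ σ.length).getD e₀)

section keepFirstConjecture

variable {M : Learner} {e₀ : ℕ} {T : ℕ → Option ℕ}

lemma keepFirstConjecture_seg_of_silent (hsilent : ∀ k, M (seg T k) = none) (n : ℕ) :
    keepFirstConjecture M e₀ (seg T n) = some e₀ := by
  rw [keepFirstConjecture, length_seg, firstConjecture_eq_none fun k hk => ?_, Option.getD_none]
  rw [take_seg T hk]
  exact hsilent k

lemma keepFirstConjecture_seg_of_first {k v : ℕ} (hk : M (seg T k) = some v)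
    (hmin : ∀ m < k, M (seg T m) = none) {n : ℕ} (hkn : k ≤ n) :
    keepFirstConjecture M e₀ (seg T n) = some v := by
  rw [keepFirstConjecture, length_seg, firstConjecture_eq_some hkn ?_ fun m hm => ?_,
    Option.getD_some]
  · rwa [take_seg T hkn]
  · rw [take_seg T (hm.le.trans hkn)]
    exact hmin m hm

lemma convergesOn_keepFirstConjecture (T : ℕ → Option ℕ) :
    ConvergesOn (keepFirstConjecture M e₀) T := by
  classical
  by_cases hex : ∃ k, M (seg T k) ≠ none
  · obtain ⟨v, hv⟩ := Option.ne_none_iff_exists'.1 (Nat.find_spec hex)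
    have hmin : ∀ m < Nat.find hex, M (seg T m) = none := fun m hm =>
      not_not.1 (Nat.find_min hex hm)
    exact ⟨Nat.find hex, fun j hj => by
      rw [keepFirstConjecture_seg_of_first hv hmin hj,
        keepFirstConjecture_seg_of_first hv hmin le_rfl]⟩
  · push Not at hex
    exact ⟨0, fun j _ => by
      rw [keepFirstConjecture_seg_of_silent hex, keepFirstConjecture_seg_of_silent hex]⟩

lemma computable_keepFirstConjecture (hM : Computable M) :
    Computable (keepFirstConjecture M e₀) :=
  Computable.option_some.comp
    (Computable.option_getD (computable_firstConjecture hM) (Computable.const e₀))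

lemma confLearnsIn_insert {H : ℕ → Set ℕ} {C : Set (Set ℕ)} (hM : FinLearnsIn H M C)
    (hsilent : ∀ T n, cntL (seg T n) ⊆ H e₀ → M (seg T n) = none) :
    ConfLearnsIn H (keepFirstConjecture M e₀) (insert (H e₀) C) := by
  refine ⟨?_, convergesOn_keepFirstConjecture⟩
  rintro L (rfl | hL) T hT
  · have hsilentT : ∀ k, M (seg T k) = none := fun k =>
      hsilent T k (hT ▸ cntL_seg_subset_cntT T k)
    exact ⟨0, e₀, keepFirstConjecture_seg_of_silent hsilentT 0, rfl, fun j _ => by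
      rw [keepFirstConjecture_seg_of_silent hsilentT, keepFirstConjecture_seg_of_silent hsilentT]⟩
  · obtain ⟨n, e, hn, he, hbefore, -⟩ := hM L hL T hT
    exact ⟨n, e, keepFirstConjecture_seg_of_first hn hbefore le_rfl, he, fun j hj => by
      rw [keepFirstConjecture_seg_of_first hn hbefore hj,
        keepFirstConjecture_seg_of_first hn hbefore le_rfl]⟩

end keepFirstConjecture

lemma EtaClosed.inter {η : PosEq} {S S' : Set ℕ} (hS : EtaClosed η S) (hS' : EtaClosed η S') :
    EtaClosed η (S ∩ S') :=
  fun x hx => Set.subset_inter (hS x hx.1) (hS' x hx.2)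

lemma exists_W_eq_inter (a b : ℕ) : ∃ e, W e = W a ∩ W b := by
  have heval : ∀ c, Partrec (evalCode c) := fun c =>
    Nat.Partrec.Code.eval_part.comp (Computable.const _) Computable.id
  have hinter : Partrec fun x => (evalCode a x).bind fun _ => evalCode b x :=
    (heval a).bind ((heval b).comp Computable.fst)
  obtain ⟨c, hc⟩ := Nat.Partrec.Code.exists_code.1 (Partrec.nat_iff.1 hinter)
  refine ⟨Encodable.encode c, Set.ext fun x => ?_⟩
  simp only [W, evalCode, Denumerable.ofNat_encode, hc, Set.mem_inter_iff, Set.mem_ofPred_eq,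
    Part.bind_dom]
  exact exists_prop

lemma EtaFamily.insert {η : PosEq} {C : Set (Set ℕ)} (hC : EtaFamily η C) {e : ℕ}
    (he : EtaClosed η (W e)) (hnew : W e ∉ C) : EtaFamily η (insert (W e) C) := by
  obtain ⟨hclosed, f, hf, hinj, rfl⟩ := hC
  refine ⟨Set.forall_mem_insert.2 ⟨he, hclosed⟩, fun | 0 => e | i + 1 => f i, ?_, ?_, ?_⟩
  · exact (Computable.nat_casesOn Computable.id (Computable.const e)
      (hf.comp Computable.snd).to₂).of_eq fun i => by cases i <;> rfl
  · rintro (_ | i) (_ | j) hij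
    · rfl
    · exact absurd ⟨j, hij.symm⟩ hnew
    · exact absurd ⟨i, hij⟩ hnew
    · rw [hinj i j hij]
  · ext L
    simp only [Set.mem_insert_iff, Set.mem_range]
    constructor
    · rintro (rfl | ⟨i, rfl⟩)
      exacts [⟨0, rfl⟩, ⟨i + 1, rfl⟩]
    · rintro ⟨_ | i, rfl⟩
      exacts [Or.inl rfl, Or.inr ⟨i, rfl⟩]

/-- If at least one η-family is finitely learnable, then there is
an η-family that is confidently learnable but not finitely learnable. -/
theorem stmt5 (η : PosEq) (h : ∃ C : Set (Set ℕ), EtaFamily η C ∧ FinLearnable C) :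
    ∃ C : Set (Set ℕ), EtaFamily η C ∧ ConfLearnable C ∧ ¬ FinLearnable C := by
  obtain ⟨C, hC, M, hMcomp, hM⟩ := h
  obtain ⟨hclosed, f, -, hinj, rfl⟩ := id hC
  have hB₀ := Set.mem_range_self (f := fun i => W (f i)) 0
  have hB₁ := Set.mem_range_self (f := fun i => W (f i)) 1
  obtain ⟨e₀, he₀⟩ := exists_W_eq_inter (f 0) (f 1)
  have hsilent : ∀ T n, cntL (seg T n) ⊆ W e₀ → M (seg T n) = none := fun T n hdata =>
    not_not.1 fun hconj => zero_ne_one <|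
      hinj 0 1 (hM.eq_of_conjecture_on_common_data hB₀ hB₁ (he₀ ▸ hdata) hconj)
  have hnew : W e₀ ∉ Set.range fun i => W (f i) := by
    intro hI
    obtain ⟨T, hT⟩ := exists_text (W e₀)
    obtain ⟨n, e, hn, -⟩ := hM _ hI T hT
    simp [hsilent T n (hT ▸ cntL_seg_subset_cntT T n)] at hn
  refine ⟨_, hC.insert (he₀ ▸ (hclosed _ hB₀).inter (hclosed _ hB₁)) hnew,
    ⟨_, computable_keepFirstConjecture hMcomp, confLearnsIn_insert hM hsilent⟩, ?_⟩
  rintro ⟨M', -, hM'⟩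
  have hsub : W e₀ ⊆ W (f 0) := he₀ ▸ Set.inter_subset_left
  have hne : W e₀ ≠ W (f 0) := fun heq => hnew (heq ▸ hB₀)
  exact hne (hM'.eq_of_subset (Set.mem_insert _ _) (Set.mem_insert_of_mem _ hB₀) hsub)

end PEL
end

section
/- Let η be a positive equivalence relation such that at least one η-family is finitely learnable. Then there are finitely learnable η-families 𝓛₁ and 𝓛₂ such that 𝓛₁ ∪ 𝓛₂ is an η-family that is not finitely learnable; furthermore, 𝓛₂ ∖ 𝓛₁ contains exactly one language. -/
/-!
A finite learner for a one-one numbered η-family commits, for each member `W (f j)`, on some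
finite sequence drawn from it; a computable search finds such sequences, and their contents
`t j` are telltales: the η-closures `[t j]` are pairwise ⊆-incomparable. Only finitely many
`[t j]` lie inside `U = [t 0 ++ t 1]`, so a tail `[t j]`, `j > N`, is incomparable both with
`U` and with `V = [t 0] ⊂ U`. Adding `U`, resp. `V`, to that tail gives two families that are
finitely learnable by waiting for the first telltale to appear. Their union contains `V ⊂ U`,
and no finite learner copes with that: a sequence from `V` on which it commits also starts a
text for `U`.
-/

namespace PEL

section Texts

variable {T : ℕ → Option ℕ} {L : Set ℕ}

lemma mem_cntL_seg {n x : ℕ} : x ∈ cntL (seg T n) ↔ ∃ m < n, T m = some x := by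
  simp [cntL, seg]

lemma cntL_seg_mono {m n : ℕ} (h : m ≤ n) : cntL (seg T m) ⊆ cntL (seg T n) := fun _ hx =>
  let ⟨k, hk, hT⟩ := mem_cntL_seg.1 hx
  mem_cntL_seg.2 ⟨k, hk.trans_le h, hT⟩

lemma IsText.cntL_seg_subset (hT : IsText T L) (n : ℕ) : cntL (seg T n) ⊆ L := fun _ hx =>
  let ⟨m, _, hm⟩ := mem_cntL_seg.1 hx
  hT ▸ ⟨m, hm⟩

lemma IsText.exists_seg_superset (hT : IsText T L) :
    ∀ t : List ℕ, (∀ x ∈ t, x ∈ L) → ∃ n, ∀ x ∈ t, x ∈ cntL (seg T n)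
  | [], _ => ⟨0, by simp⟩
  | a :: t, ht => by
    obtain ⟨n, hn⟩ := hT.exists_seg_superset t fun x hx => ht x (List.mem_cons_of_mem a hx)
    obtain ⟨k, hk⟩ : a ∈ cntT T := hT ▸ ht a List.mem_cons_self
    refine ⟨max n (k + 1), fun x hx => ?_⟩
    rcases List.mem_cons.1 hx with rfl | hx
    · exact mem_cntL_seg.2 ⟨k, by omega, hk⟩
    · exact cntL_seg_mono (le_max_left _ _) (hn x hx)

open Classical in
noncomputable def extText (σ : List (Option ℕ)) (L : Set ℕ) (k : ℕ) : Option ℕ :=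
  σ[k]?.getD (if k - σ.length ∈ L then some (k - σ.length) else none)

lemma seg_extText (σ : List (Option ℕ)) (L : Set ℕ) : seg (extText σ L) σ.length = σ :=
  List.ext_getElem (by simp [seg]) fun i _ hi => by simp [seg, extText, hi]

lemma isText_extText {σ : List (Option ℕ)} (hσ : cntL σ ⊆ L) : IsText (extText σ L) L := by
  ext x
  constructor
  · rintro ⟨k, hk⟩
    by_cases hkσ : k < σ.length
    · simp only [extText, List.getElem?_eq_getElem hkσ, Option.getD_some] at hk
      exact hσ (show some x ∈ σ from hk ▸ List.getElem_mem hkσ)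
    · simp only [extText, List.getElem?_eq_none (not_lt.1 hkσ), Option.getD_none] at hk
      split_ifs at hk with hL
      exact Option.some_injective _ hk ▸ hL
  · intro hx
    refine ⟨x + σ.length, ?_⟩
    simp [extText, hx]

end Texts

section FiniteLearning

variable {H : ℕ → Set ℕ} {M : Learner} {C : Set (Set ℕ)} {L : Set ℕ}

/-- The first hypothesis of a finite learner is final, and `σ` starts a text for every language
containing `cntL σ`. -/
lemma FinLearnsIn.eq_of_output (hM : FinLearnsIn H M C) (hL : L ∈ C) {σ : List (Option ℕ)}
    {e : ℕ} (hσ : cntL σ ⊆ L) (he : M σ = some e) : H e = L := by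
  obtain ⟨n, e', hn, hHe', hbefore, hafter⟩ := hM L hL _ (isText_extText hσ)
  rcases le_or_gt n σ.length with h | h
  · have := hafter σ.length h
    rw [seg_extText, he, hn, Option.some_inj] at this
    exact this ▸ hHe'
  · have := hbefore σ.length h
    rw [seg_extText, he] at this
    cases this

lemma FinLearnsIn.exists_output (hM : FinLearnsIn H M C) (hL : L ∈ C) :
    ∃ σ e, cntL σ ⊆ L ∧ M σ = some e := by
  have hT := isText_extText (σ := []) (L := L) (by simp [cntL])
  obtain ⟨n, e, hn, -⟩ := hM L hL _ hT
  exact ⟨_, e, hT.cntL_seg_subset n, hn⟩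

lemma not_finLearnsIn_of_ssubset {L' : Set ℕ} (hL : L ∈ C) (hL' : L' ∈ C) (h : L ⊂ L') :
    ¬ FinLearnsIn H M C := fun hM =>
  let ⟨_, _, hσ, he⟩ := hM.exists_output hL
  h.ne ((hM.eq_of_output hL hσ he).symm.trans (hM.eq_of_output hL' (hσ.trans h.subset) he))

end FiniteLearning

section Computability

open Encodable Nat.Partrec Nat.Partrec.Code

variable {α β : Type*} [Primcodable α] [Primcodable β]

theorem exists_computable_choice [Inhabited β] {P : α → β → Prop} [∀ a b, Decidable (P a b)]
    (hP : ComputablePred fun q : α × β => P q.1 q.2) (H : ∀ a, ∃ b, P a b) :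
    ∃ g : α → β, Computable g ∧ ∀ a, P a (g a) := by
  let Q a n := P a ((decode n : Option β).getD default)
  have hQ : ComputablePred fun q : α × ℕ => Q q.1 q.2 :=
    Computable.computablePred <| hP.decide.comp <|
      Computable.fst.pair (Computable.option_getD (Computable.decode.comp Computable.snd)
        (Computable.const default))
  have H' a : ∃ n, Q a n := let ⟨b, hb⟩ := H a; ⟨encode b, by simpa [Q] using hb⟩
  exact ⟨fun a => (decode (Nat.find (H' a))).getD default,
    Computable.option_getD (Computable.decode.comp (Computable.find hQ H'))
      (Computable.const default),
    fun a => Nat.find_spec (H' a)⟩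

theorem rePred_exists_nat {P : α → ℕ → Prop} [∀ a n, Decidable (P a n)]
    (hP : ComputablePred fun q : α × ℕ => P q.1 q.2) : REPred fun a => ∃ n, P a n := by
  refine (Partrec.rfind (p := fun a n => Part.some (decide (P a n))) ?_).dom_re.of_eq ?_
  · exact hP.decide.to₂.partrec₂
  · exact fun a => Nat.rfind_dom.trans (by simp)

theorem exists_computable_W_eq {P : α → ℕ → Prop} (hP : REPred fun q : α × ℕ => P q.1 q.2) :
    ∃ g : α → ℕ, Computable g ∧ ∀ a, W (g a) = {x | P a x} := by
  obtain ⟨c, hc⟩ := exists_code.1 (Partrec.bind_decode₂_iff.1 hP)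
  refine ⟨fun a => encode (curry c (encode a)),
    (Primrec.encode.comp (primrec₂_curry.comp (Primrec.const c) Primrec.encode)).to_comp,
    fun a => Set.ext fun x => ?_⟩
  have hx : Nat.pair (encode a) x = encode (a, x) := by simp [encode_prod_val]
  show (eval (Denumerable.ofNat Code (encode (curry c (encode a)))) x).Dom ↔ P a x
  rw [Denumerable.ofNat_encode, eval_curry, hc]
  dsimp only
  rw [hx, decode₂_encode]
  simp only [Part.coe_some, Part.bind_some, Part.map_Dom]
  exact ⟨fun ⟨h, _⟩ => h, fun h => ⟨h, trivial⟩⟩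

lemma mem_W_iff_exists_evaln {e x : ℕ} :
    x ∈ W e ↔ ∃ s, (evaln s (Denumerable.ofNat Code e) x).isSome := by
  simp only [W, evalCode, Part.dom_iff_mem, evaln_complete,
    Option.isSome_iff_exists, Option.mem_def]
  exact ⟨fun ⟨y, s, h⟩ => ⟨s, y, h⟩, fun ⟨s, y, h⟩ => ⟨y, s, h⟩⟩

lemma forall_mem_W_iff_exists_evaln {e : ℕ} (t : List ℕ) :
    (∀ x ∈ t, x ∈ W e) ↔ ∃ s, ∀ x ∈ t, (evaln s (Denumerable.ofNat Code e) x).isSome := by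
  refine ⟨fun h => ?_, fun ⟨s, hs⟩ x hx => mem_W_iff_exists_evaln.2 ⟨s, hs x hx⟩⟩
  induction t with
  | nil => exact ⟨0, by simp⟩
  | cons a t ih =>
    obtain ⟨s, hs⟩ := ih fun x hx => h x (List.mem_cons_of_mem a hx)
    obtain ⟨s', hs'⟩ := mem_W_iff_exists_evaln.1 (h a List.mem_cons_self)
    have mono {k k' x} (hk : k ≤ k') (h : (evaln k (Denumerable.ofNat Code e) x).isSome) :
        (evaln k' (Denumerable.ofNat Code e) x).isSome :=
      let ⟨y, hy⟩ := Option.isSome_iff_exists.1 h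
      Option.isSome_iff_exists.2 ⟨y, evaln_mono hk hy⟩
    refine ⟨max s s', fun x hx => ?_⟩
    rcases List.mem_cons.1 hx with rfl | hx
    exacts [mono (le_max_right _ _) hs', mono (le_max_left _ _) (hs x hx)]

theorem computable_find?_range {p : α → ℕ → Bool} (hp : Computable₂ p) :
    Computable₂ fun a n => (List.range n).find? (p a) := by
  have step : Computable₂ fun a (q : ℕ × Option ℕ) => q.2 <|> bif p a q.1 then some q.1 else none :=
    (Primrec.option_orElse.to_comp.comp (Computable.snd.comp Computable.snd)
      (Computable.cond (hp.comp Computable.fst (Computable.fst.comp Computable.snd))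
        (Computable.option_some.comp (Computable.fst.comp Computable.snd))
        (Computable.const none))).to₂
  refine (Computable.nat_rec Computable.snd (Computable.const none)
    (step.comp (Computable.fst.comp Computable.fst) Computable.snd).to₂).to₂.of_eq
    fun ⟨a, n⟩ => ?_
  induction n with
  | zero => rfl
  | succ n ih =>
    simp only at ih ⊢
    rw [ih, List.range_succ, List.find?_append, List.find?_singleton]
    cases h : p a n <;> cases (List.range n).find? (p a) <;> simp

end Computability

section Incomparable

variable {ι α : Type*}

def PairwiseIncomparable [LE α] (S : ι → α) : Prop := ∀ i j, S i ≤ S j → i = j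

lemma PairwiseIncomparable.injective [Preorder α] {S : ι → α} (h : PairwiseIncomparable S) :
    Function.Injective S := fun _ _ hij => h _ _ hij.le

lemma PairwiseIncomparable.comp [LE α] {κ : Type*} {S : ι → α} (h : PairwiseIncomparable S)
    {g : κ → ι} (hg : Function.Injective g) : PairwiseIncomparable (S ∘ g) :=
  fun _ _ hij => hg (h _ _ hij)

def consSeq (a : α) (S : ℕ → α) : ℕ → α
  | 0 => a
  | k + 1 => S k

lemma comp_consSeq {β : Type*} (f : α → β) (a : α) (S : ℕ → α) :
    f ∘ consSeq a S = consSeq (f a) (f ∘ S) := by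
  funext k; cases k <;> rfl

lemma range_consSeq (a : α) (S : ℕ → α) : Set.range (consSeq a S) = insert a (Set.range S) := by
  ext x
  simp only [Set.mem_range, Set.mem_insert_iff]
  constructor
  · rintro ⟨_ | k, rfl⟩
    exacts [Or.inl rfl, Or.inr ⟨k, rfl⟩]
  · rintro (rfl | ⟨k, rfl⟩)
    exacts [⟨0, rfl⟩, ⟨k + 1, rfl⟩]

lemma computable_consSeq [Primcodable α] {a : α} {S : ℕ → α} (hS : Computable S) :
    Computable (consSeq a S) :=
  (Computable.nat_casesOn Computable.id (Computable.const a) (hS.comp Computable.snd).to₂).of_eq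
    fun k => by cases k <;> rfl

lemma injective_consSeq {a : α} {S : ℕ → α} (hS : Function.Injective S)
    (ha : a ∉ Set.range S) : Function.Injective (consSeq a S) := by
  rintro (_ | i) (_ | j) h
  · rfl
  · exact absurd ⟨j, h.symm⟩ ha
  · exact absurd ⟨i, h⟩ ha
  · exact congrArg _ (hS h)

lemma PairwiseIncomparable.consSeq [LE α] {a : α} {S : ℕ → α} (h : PairwiseIncomparable S)
    (hle : ∀ k, ¬ a ≤ S k) (hge : ∀ k, ¬ S k ≤ a) : PairwiseIncomparable (consSeq a S) := by
  rintro (_ | i) (_ | j) hij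
  · rfl
  · exact absurd hij (hle j)
  · exact absurd hij (hge i)
  · exact congrArg _ (h i j hij)

end Incomparable

section EtaClosure

variable (η : PosEq)

def etaClosure (t : List ℕ) : Set ℕ := {x | ∃ d ∈ t, η.rel d x}

variable {η}

lemma etaClosed_etaClosure (t : List ℕ) : EtaClosed η (etaClosure η t) :=
  fun _ ⟨d, hd, hdx⟩ _ hy => ⟨d, hd, η.equiv.trans hdx hy⟩

lemma mem_etaClosure_of_mem {t : List ℕ} {d : ℕ} (hd : d ∈ t) : d ∈ etaClosure η t :=
  ⟨d, hd, η.equiv.refl d⟩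

lemma etaClosure_subset_iff {t : List ℕ} {S : Set ℕ} (hS : EtaClosed η S) :
    etaClosure η t ⊆ S ↔ ∀ d ∈ t, d ∈ S :=
  ⟨fun h _ hd => h (mem_etaClosure_of_mem hd), fun h _ ⟨d, hd, hdx⟩ => hS d (h d hd) hdx⟩

lemma etaClosure_append (t u : List ℕ) :
    etaClosure η (t ++ u) = etaClosure η t ∪ etaClosure η u := by
  ext x
  simp [etaClosure, or_and_right, exists_or]

/-- An η-closed subset of `etaClosure η t` is determined by which members of `t` it contains. -/
lemma finite_setOf_etaClosed_subset (t : List ℕ) :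
    {S | EtaClosed η S ∧ S ⊆ etaClosure η t}.Finite := by
  have hS : ∀ S ∈ {S | EtaClosed η S ∧ S ⊆ etaClosure η t},
      S = {x | ∃ d ∈ t, d ∈ S ∧ η.rel d x} := fun S ⟨hcl, hsub⟩ => Set.ext fun x =>
    ⟨fun hx => let ⟨d, hd, hdx⟩ := hsub hx; ⟨d, hd, hcl x hx (η.equiv.symm hdx), hdx⟩,
      fun ⟨d, _, hdS, hdx⟩ => hcl d hdS hdx⟩
  refine Set.Finite.of_finite_image (f := fun S => S ∩ {d | d ∈ t}) ?_ fun S hS₁ S' hS₂ h => ?_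
  · exact (t.finite_toSet.finite_subsets).subset
      (Set.image_subset_iff.2 fun S _ => Set.inter_subset_right)
  · rw [hS S hS₁, hS S' hS₂]
    ext x
    refine exists_congr fun d => and_congr_right fun hd => and_congr_left' ?_
    simpa [hd] using Set.ext_iff.1 h d

open Nat.Partrec Nat.Partrec.Code in
lemma rePred_mem_etaClosure : REPred fun q : List ℕ × ℕ => q.2 ∈ etaClosure η q.1 := by
  obtain ⟨e, he⟩ := η.re
  have hev : PrimrecRel fun (d : ℕ) (q : (List ℕ × ℕ) × ℕ) =>
      (evaln q.2 (Denumerable.ofNat Code e) (Nat.pair d q.1.2)).isSome := by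
    refine Primrec₂.primrecRel ((Primrec.option_isSome.comp (primrec_evaln.comp
      (((Primrec.snd.comp Primrec.snd).pair (Primrec.const (Denumerable.ofNat Code e))).pair
        (Primrec₂.natPair.comp Primrec.fst (Primrec.snd.comp (Primrec.fst.comp Primrec.snd))))))
      |>.of_eq fun _ => ?_)
    simp
  refine (rePred_exists_nat (P := fun q s => ∃ d ∈ q.1,
      (evaln s (Denumerable.ofNat Code e) (Nat.pair d q.2)).isSome)
    (hev.exists_mem_list.comp (Primrec.fst.comp Primrec.fst) Primrec.id).computablePred).of_eq
    fun q => ?_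
  simp only [etaClosure, Set.mem_ofPred_eq, he, mem_W_iff_exists_evaln]
  exact ⟨fun ⟨s, d, hd, h⟩ => ⟨d, hd, s, h⟩, fun ⟨d, hd, s, h⟩ => ⟨s, d, hd, h⟩⟩

lemma PairwiseIncomparable.finite_setOf_etaClosure_subset {s : ℕ → List ℕ}
    (hs : PairwiseIncomparable (etaClosure η ∘ s)) (t : List ℕ) :
    {j | etaClosure η (s j) ⊆ etaClosure η t}.Finite :=
  ((finite_setOf_etaClosed_subset t).preimage hs.injective.injOn).subset fun j hj =>
    ⟨etaClosed_etaClosure (s j), hj⟩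

variable (η) in
lemma exists_computable_W_eq_etaClosure :
    ∃ g : List ℕ → ℕ, Computable g ∧ ∀ t, W (g t) = etaClosure η t :=
  exists_computable_W_eq (P := fun t x => x ∈ etaClosure η t) rePred_mem_etaClosure

end EtaClosure

section Families

variable {η : PosEq} {s : ℕ → List ℕ}

def incomparableLearner (s : ℕ → List ℕ) (g : ℕ → ℕ) : Learner := fun σ =>
  ((List.range (σ.length + 1)).find? fun r => decide (∀ d ∈ s r, some d ∈ σ)).map g

lemma computable_incomparableLearner {g : ℕ → ℕ} (hs : Computable s) (hg : Computable g) :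
    Computable (incomparableLearner s g) := by
  have hmem : PrimrecRel fun (t : List ℕ) (σ : List (Option ℕ)) => ∀ d ∈ t, some d ∈ σ :=
    (PrimrecRel.forall_mem_list (PrimrecRel.exists_mem_list (Primrec.eq.comp₂ Primrec₂.left
      (Primrec.option_some.comp₂ Primrec₂.right))).swap).of_eq fun _ _ => by simp
  have hfires : Computable₂ fun (σ : List (Option ℕ)) r => decide (∀ d ∈ s r, some d ∈ σ) :=
    (hmem.decide.to_comp.comp (hs.comp Computable.snd) Computable.fst).to₂
  exact Computable.option_map
    ((computable_find?_range hfires).comp Computable.id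
      (Computable.succ.comp Computable.list_length))
    (hg.comp Computable.snd).to₂

variable {T : ℕ → Option ℕ} {r : ℕ}

lemma incomparableLearner_seg (hs : PairwiseIncomparable (etaClosure η ∘ s)) (g : ℕ → ℕ)
    (hT : IsText T (etaClosure η (s r))) (n : ℕ) :
    incomparableLearner s g (seg T n) =
      if r ≤ n ∧ ∀ d ∈ s r, some d ∈ seg T n then some (g r) else none := by
  have hlen : (seg T n).length = n := by simp [seg]
  -- the η-closed `etaClosure η (s r)` contains `etaClosure η (s r')` once it contains `s r'`
  have huniq : ∀ r', (∀ d ∈ s r', some d ∈ seg T n) → r' = r := fun r' h =>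
    hs r' r <| (etaClosure_subset_iff (etaClosed_etaClosure _)).2 fun d hd =>
      hT.cntL_seg_subset n (h d hd)
  unfold incomparableLearner
  rw [hlen]
  rcases hfind : (List.range (n + 1)).find? (fun r' => decide (∀ d ∈ s r', some d ∈ seg T n))
    with _ | r'
  · rw [List.find?_eq_none] at hfind
    refine (if_neg fun ⟨hr, hd⟩ => hfind r (List.mem_range.2 (by omega)) ?_).symm
    simpa using hd
  · have hr' := huniq r' (by simpa using List.find?_some hfind)
    subst hr'
    have hmem := List.mem_range.1 (List.mem_of_find?_eq_some hfind)
    rw [if_pos ⟨by omega, by simpa using List.find?_some hfind⟩]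
    rfl

lemma finLearnsIn_incomparableLearner (hs : PairwiseIncomparable (etaClosure η ∘ s)) {g : ℕ → ℕ}
    (hg : ∀ r, W (g r) = etaClosure η (s r)) :
    FinLearnsIn W (incomparableLearner s g) (Set.range (etaClosure η ∘ s)) := by
  rintro _ ⟨r, rfl⟩ T hT
  let P n := r ≤ n ∧ ∀ d ∈ s r, some d ∈ seg T n
  have hP : ∃ n, P n := by
    obtain ⟨n, hn⟩ := hT.exists_seg_superset (s r) fun d hd => mem_etaClosure_of_mem hd
    exact ⟨max r n, le_max_left _ _, fun d hd => cntL_seg_mono (le_max_right _ _) (hn d hd)⟩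
  have hmono {m n} (hmn : m ≤ n) (hm : P m) : P n :=
    ⟨hm.1.trans hmn, fun d hd => cntL_seg_mono hmn (hm.2 d hd)⟩
  have hout n : incomparableLearner s g (seg T n) = if P n then some (g r) else none :=
    incomparableLearner_seg hs g hT n
  refine ⟨Nat.find hP, g r, by rw [hout, if_pos (Nat.find_spec hP)], hg r,
    fun m hm => by rw [hout, if_neg (Nat.find_min hP hm)], fun j hj => ?_⟩
  rw [hout, hout, if_pos (Nat.find_spec hP), if_pos (hmono hj (Nat.find_spec hP))]

theorem finLearnable_range_etaClosure (hs : Computable s)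
    (hsep : PairwiseIncomparable (etaClosure η ∘ s)) :
    FinLearnable (Set.range (etaClosure η ∘ s)) := by
  obtain ⟨g, hgc, hg⟩ := exists_computable_W_eq_etaClosure η
  exact ⟨_, computable_incomparableLearner hs (hgc.comp hs),
    finLearnsIn_incomparableLearner hsep fun r => hg (s r)⟩

theorem etaFamily_range_etaClosure (hs : Computable s)
    (hinj : Function.Injective (etaClosure η ∘ s)) :
    EtaFamily η (Set.range (etaClosure η ∘ s)) := by
  obtain ⟨g, hgc, hg⟩ := exists_computable_W_eq_etaClosure η
  refine ⟨?_, g ∘ s, hgc.comp hs, fun i j hij => hinj ?_, ?_⟩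
  · rintro _ ⟨r, rfl⟩
    exact etaClosed_etaClosure (s r)
  · simpa [hg] using hij
  · simp [Function.comp_def, hg]

end Families

section Telltales

open Nat.Partrec Nat.Partrec.Code

lemma primrec_reduceOption : Primrec (List.reduceOption : List (Option ℕ) → List ℕ) :=
  (Primrec.listFilterMap Primrec.id Primrec₂.right).of_eq fun _ => rfl

/-- A computable search through pairs `(σ, s)`, where `s` bounds the number of steps needed
to confirm `cntL σ ⊆ W (f j)`. -/
lemma exists_computable_output_seq {M : Learner} (hM : Computable M) {f : ℕ → ℕ}
    (hf : Computable f) (h : ∀ j, ∃ σ, cntL σ ⊆ W (f j) ∧ (M σ).isSome) :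
    ∃ τ : ℕ → List (Option ℕ), Computable τ ∧ ∀ j, cntL (τ j) ⊆ W (f j) ∧ (M (τ j)).isSome := by
  let P (j : ℕ) (q : List (Option ℕ) × ℕ) : Prop := (M q.1).isSome ∧
    ∀ x ∈ q.1.reduceOption, (evaln q.2 (Denumerable.ofNat Code (f j)) x).isSome
  have hev : PrimrecRel fun (x : ℕ) (q : ℕ × ℕ) =>
      (evaln q.2 (Denumerable.ofNat Code q.1) x).isSome := by
    refine Primrec₂.primrecRel ((Primrec.option_isSome.comp (primrec_evaln.comp
      (((Primrec.snd.comp Primrec.snd).pair ((Primrec.ofNat Code).comp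
        (Primrec.fst.comp Primrec.snd))).pair Primrec.fst))).of_eq fun _ => ?_)
    simp
  have hP : ComputablePred fun q : ℕ × (List (Option ℕ) × ℕ) => P q.1 q.2 := by
    refine Computable.computablePred ((Primrec.and.to_comp.comp
      (Primrec.option_isSome.to_comp.comp (hM.comp (Computable.fst.comp Computable.snd)))
      (hev.forall_mem_list.decide.to_comp.comp
        (primrec_reduceOption.to_comp.comp (Computable.fst.comp Computable.snd))
        ((hf.comp Computable.fst).pair (Computable.snd.comp Computable.snd)))).of_eq fun _ => ?_)
    simp [P]
  have H j : ∃ q, P j q := by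
    obtain ⟨σ, hσ, hMσ⟩ := h j
    obtain ⟨s, hs⟩ := (forall_mem_W_iff_exists_evaln σ.reduceOption).1
      fun x hx => hσ (List.reduceOption_mem_iff.1 hx)
    exact ⟨(σ, s), hMσ, hs⟩
  obtain ⟨g, hgc, hg⟩ := exists_computable_choice hP H
  refine ⟨fun j => (g j).1, Computable.fst.comp hgc, fun j => ⟨fun x hx => ?_, (hg j).1⟩⟩
  exact mem_W_iff_exists_evaln.2 ⟨_, (hg j).2 x (List.reduceOption_mem_iff.2 hx)⟩

/-- The content of a sequence on which the learner commits is a telltale: it lies in no other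
language of the family. -/
theorem exists_computable_pairwiseIncomparable {η : PosEq}
    (h : ∃ C : Set (Set ℕ), EtaFamily η C ∧ FinLearnable C) :
    ∃ s : ℕ → List ℕ, Computable s ∧ PairwiseIncomparable (etaClosure η ∘ s) := by
  obtain ⟨C, ⟨hclosed, f, hfc, hfinj, rfl⟩, M, hMc, hM⟩ := h
  have hmem j : W (f j) ∈ Set.range fun i => W (f i) := ⟨j, rfl⟩
  obtain ⟨τ, hτc, hτ⟩ := exists_computable_output_seq hMc hfc fun j =>
    let ⟨σ, _, hσ, he⟩ := hM.exists_output (hmem j)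
    ⟨σ, hσ, by simp [he]⟩
  refine ⟨fun j => (τ j).reduceOption, primrec_reduceOption.to_comp.comp hτc, fun i j hij => ?_⟩
  obtain ⟨e, he⟩ := Option.isSome_iff_exists.1 (hτ i).2
  have hsub : cntL (τ i) ⊆ W (f j) := fun x hx =>
    (etaClosure_subset_iff (hclosed _ (hmem j))).2
      (fun d hd => (hτ j).1 (List.reduceOption_mem_iff.1 hd))
      (hij (mem_etaClosure_of_mem (List.reduceOption_mem_iff.2 hx)))
  exact hfinj i j
    ((hM.eq_of_output (hmem i) (hτ i).1 he).symm.trans (hM.eq_of_output (hmem j) hsub he))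

end Telltales

section Construction

variable {η : PosEq}

/-- Prepending `u` and `v` to the incomparable family `s` gives the two finitely learnable
families; their union is not, because it contains `etaClosure η v ⊂ etaClosure η u`. -/
theorem exists_families_of_ssubset {u v : List ℕ} {s : ℕ → List ℕ} (hs : Computable s)
    (hsep : PairwiseIncomparable (etaClosure η ∘ s))
    (hvu : etaClosure η v ⊂ etaClosure η u) (hsu : ∀ k, ¬ etaClosure η (s k) ⊆ etaClosure η u)
    (hvs : ∀ k, ¬ etaClosure η v ⊆ etaClosure η (s k)) :
    ∃ C₁ C₂ : Set (Set ℕ),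
      EtaFamily η C₁ ∧ EtaFamily η C₂ ∧
      FinLearnable C₁ ∧ FinLearnable C₂ ∧
      EtaFamily η (C₁ ∪ C₂) ∧ ¬ FinLearnable (C₁ ∪ C₂) ∧
      ∃ L : Set ℕ, C₂ \ C₁ = {L} := by
  have hus k : ¬ etaClosure η u ⊆ etaClosure η (s k) := fun h => hvs k (hvu.subset.trans h)
  have hsv k : ¬ etaClosure η (s k) ⊆ etaClosure η v := fun h => hsu k (h.trans hvu.subset)
  have h₁ : PairwiseIncomparable (etaClosure η ∘ consSeq u s) := by
    rw [comp_consSeq]; exact hsep.consSeq hus hsu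
  have h₂ : PairwiseIncomparable (etaClosure η ∘ consSeq v s) := by
    rw [comp_consSeq]; exact hsep.consSeq hvs hsv
  have hunion : Set.range (etaClosure η ∘ consSeq u s) ∪ Set.range (etaClosure η ∘ consSeq v s) =
      Set.range (etaClosure η ∘ consSeq u (consSeq v s)) := by
    simp only [comp_consSeq, range_consSeq, Set.insert_union, Set.union_insert, Set.union_self]
    exact Set.insert_comm _ _ _
  have hinj : Function.Injective (etaClosure η ∘ consSeq u (consSeq v s)) := by
    rw [comp_consSeq]
    refine injective_consSeq h₂.injective ?_
    rw [comp_consSeq, range_consSeq, Set.mem_insert_iff, not_or]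
    exact ⟨hvu.ne', fun ⟨k, hk⟩ => hus k hk.ge⟩
  refine ⟨_, _, etaFamily_range_etaClosure (computable_consSeq hs) h₁.injective,
    etaFamily_range_etaClosure (computable_consSeq hs) h₂.injective,
    finLearnable_range_etaClosure (computable_consSeq hs) h₁,
    finLearnable_range_etaClosure (computable_consSeq hs) h₂,
    hunion ▸ etaFamily_range_etaClosure (computable_consSeq (computable_consSeq hs)) hinj,
    fun ⟨_, _, hM⟩ => not_finLearnsIn_of_ssubset (Or.inr ⟨0, rfl⟩) (Or.inl ⟨0, rfl⟩) hvu hM,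
    etaClosure η v, ?_⟩
  have hv : etaClosure η v ∉ insert (etaClosure η u) (Set.range (etaClosure η ∘ s)) := by
    rw [Set.mem_insert_iff, not_or]
    exact ⟨hvu.ne, fun ⟨k, hk⟩ => hvs k hk.ge⟩
  rw [comp_consSeq, comp_consSeq, range_consSeq, range_consSeq, Set.insert_sdiff_of_notMem _ hv,
    Set.sdiff_eq_empty.2 (Set.subset_insert _ _), insert_empty_eq]

end Construction

/-- If at least one η-family is finitely learnable, then there are
finitely learnable η-families 𝓛₁, 𝓛₂ whose union is an η-family that is not
finitely learnable; moreover 𝓛₂ ∖ 𝓛₁ contains exactly one language. -/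
theorem stmt9 (η : PosEq) (h : ∃ C : Set (Set ℕ), EtaFamily η C ∧ FinLearnable C) :
    ∃ C₁ C₂ : Set (Set ℕ),
      EtaFamily η C₁ ∧ EtaFamily η C₂ ∧
      FinLearnable C₁ ∧ FinLearnable C₂ ∧
      EtaFamily η (C₁ ∪ C₂) ∧ ¬ FinLearnable (C₁ ∪ C₂) ∧
      ∃ L : Set ℕ, C₂ \ C₁ = {L} := by
  obtain ⟨s, hs, hsep⟩ := exists_computable_pairwiseIncomparable h
  obtain ⟨N, hN⟩ := (hsep.finite_setOf_etaClosure_subset (s 0 ++ s 1)).bddAbove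
  have hsu k : ¬ etaClosure η (s (N + 1 + k)) ⊆ etaClosure η (s 0 ++ s 1) := fun h => by
    have := hN h
    omega
  have hvu : etaClosure η (s 0) ⊂ etaClosure η (s 0 ++ s 1) := by
    rw [etaClosure_append]
    refine Set.ssubset_iff_subset_ne.2 ⟨Set.subset_union_left, fun h => ?_⟩
    exact one_ne_zero (hsep 1 0 (Set.subset_union_right.trans h.symm.subset))
  exact exists_families_of_ssubset
    (hs.comp (Primrec.nat_add.comp (Primrec.const (N + 1)) Primrec.id).to_comp)
    (hsep.comp (add_right_injective (N + 1))) hvu hsu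
    fun k h => by have := hsep 0 (N + 1 + k) h; omega

end PEL
end
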